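/- Let ψ be a warping function with Θ(r) = ψ^{1-n}(r)∫_0^r ψ^{n-1} ∈ L¹(0,∞), and set θ = ∫_0^∞ Θ dr. Let p,q > 0 and let (u,v) be a globally positive solution of the integrated system with u(0)=ξ, v(0)=η. Then the initial data necessarily satisfy ξ ≥ (η - θξ^p)₊^q · θ and η ≥ (ξ - θη^q)₊^p · θ, where x₊ = max(x,0). In particular, for fixed ξ the set of admissible η is bounded and bounded away from zero. -/

import Mathlib

open Filter MeasureTheory Set

/-!
Since the potential of a nonnegative function is nonnegative, `u ≤ ξ` and `v ≤ η`; bounding the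
potential of `u ^ p ≤ ξ ^ p` by `ξ ^ p θ` then gives `v ≥ (η - θ ξ ^ p)₊`, and symmetrically
`u ≥ (ξ - θ η ^ q)₊`. Feeding the lower bound on `v` back into the equation for `u`, positivity of
`u` yields `(η - θ ξ ^ p)₊ ^ q ∫₀ʳ Θ < ξ` for every `r`, and `r → ∞` gives the first inequality.

The lower bound needs `v ^ q ψ ^ (n - 1)` to be integrable, hence `v` to be measurable. This holds
because `v` is `η` minus the primitive of a nonnegative function, and such a primitive is monotone
on the initial interval where the integrand is integrable and takes the junk value `0` beyond it.
-/

/-- With `ω = ψ ^ (n - 1)`, `volRatio ω` is the paper's `Θ` and the system reads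
`u = ξ - radialPotential ω (v ^ q)`, `v = η - radialPotential ω (u ^ p)`. -/
noncomputable def volRatio (ω : ℝ → ℝ) (r : ℝ) : ℝ := (∫ s in (0:ℝ)..r, ω s) / ω r

noncomputable def radialSlope (ω w : ℝ → ℝ) (s : ℝ) : ℝ := (∫ t in (0:ℝ)..s, w t * ω t) / ω s

noncomputable def radialPotential (ω w : ℝ → ℝ) (r : ℝ) : ℝ :=
  ∫ s in (0:ℝ)..r, radialSlope ω w s

theorem intervalIntegral_nonneg_of_forall_pos {f : ℝ → ℝ} (hf : ∀ t > 0, 0 ≤ f t) {s : ℝ}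
    (hs : 0 ≤ s) : 0 ≤ ∫ t in (0:ℝ)..s, f t := by
  rw [intervalIntegral.integral_of_le hs]
  exact setIntegral_nonneg measurableSet_Ioc fun t ht => hf t ht.1

theorem aemeasurable_primitive_of_nonneg {f : ℝ → ℝ} (hf : ∀ t > 0, 0 ≤ f t) :
    AEMeasurable (fun s => ∫ t in (0:ℝ)..s, f t) (volume.restrict (Ioi 0)) := by
  set A := {s ∈ Ioi (0:ℝ) | IntervalIntegrable f volume 0 s}
  have hA : OrdConnected A := ⟨fun x hx y hy z hz =>
    ⟨hx.1.trans_le hz.1, hy.2.mono_set (uIcc_subset_uIcc left_mem_uIcc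
      (mem_uIcc_of_le (hx.1.le.trans hz.1) hz.2))⟩⟩
  have hmono : MonotoneOn (fun s => ∫ t in (0:ℝ)..s, f t) A := fun x hx y hy hxy =>
    intervalIntegral.integral_mono_interval le_rfl hx.1.le hxy
      (ae_restrict_of_forall_mem measurableSet_Ioc fun t ht => hf t ht.1) hy.2
  have hzero : ∀ s ∈ Ioi (0:ℝ) \ A, 0 = ∫ t in (0:ℝ)..s, f t := fun s hs =>
    (intervalIntegral.integral_undef fun h => hs.2 ⟨hs.1, h⟩).symm
  rw [← union_sdiff_cancel (sep_subset (Ioi (0:ℝ)) _), aemeasurable_union_iff]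
  exact ⟨aemeasurable_restrict_of_monotoneOn hA.measurableSet hmono,
    aemeasurable_const.congr
      (ae_restrict_of_forall_mem (measurableSet_Ioi.diff hA.measurableSet) hzero)⟩

theorem MeasureTheory.LocallyIntegrableOn.intervalIntegrable_of_Ici {ω : ℝ → ℝ}
    (hω : LocallyIntegrableOn ω (Ici 0)) {s : ℝ} (hs : 0 ≤ s) :
    IntervalIntegrable ω volume 0 s := by
  refine (hω.integrableOn_compact_subset ?_ isCompact_uIcc).intervalIntegrable
  rw [uIcc_of_le hs]
  exact Icc_subset_Ici_self

section Radial

variable {ω w : ℝ → ℝ} {c d r s : ℝ}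

theorem integral_mul_weight_le (hω : ∀ t > 0, 0 ≤ ω t) (hωi : IntervalIntegrable ω volume 0 s)
    (hw : ∀ t > 0, 0 ≤ w t) (hwc : ∀ t > 0, w t ≤ c) (hs : 0 ≤ s) :
    ∫ t in (0:ℝ)..s, w t * ω t ≤ c * ∫ t in (0:ℝ)..s, ω t := by
  rw [← intervalIntegral.integral_const_mul, intervalIntegral.integral_of_le hs,
    intervalIntegral.integral_of_le hs]
  exact integral_mono_of_nonneg
    (ae_restrict_of_forall_mem measurableSet_Ioc fun t ht => mul_nonneg (hw t ht.1) (hω t ht.1))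
    (hωi.1.const_mul c)
    (ae_restrict_of_forall_mem measurableSet_Ioc fun t ht =>
      mul_le_mul_of_nonneg_right (hwc t ht.1) (hω t ht.1))

theorem intervalIntegrable_mul_weight (hωi : IntervalIntegrable ω volume 0 s)
    (hw : AEMeasurable w (volume.restrict (Ioi 0))) (hdw : ∀ t > 0, d ≤ w t)
    (hwc : ∀ t > 0, w t ≤ c) (hs : 0 ≤ s) :
    IntervalIntegrable (fun t => w t * ω t) volume 0 s := by
  rw [intervalIntegrable_iff_integrableOn_Ioc_of_le hs]
  exact hωi.1.bdd_mul
    (hw.mono_measure (Measure.restrict_mono Ioc_subset_Ioi_self le_rfl)).aestronglyMeasurable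
    (ae_restrict_of_forall_mem measurableSet_Ioc fun t ht =>
      abs_le_max_abs_abs (hdw t ht.1) (hwc t ht.1))

theorem mul_integral_le_integral_mul_weight (hω : ∀ t > 0, 0 ≤ ω t)
    (hωi : IntervalIntegrable ω volume 0 s) (hw : AEMeasurable w (volume.restrict (Ioi 0)))
    (hdw : ∀ t > 0, d ≤ w t) (hwc : ∀ t > 0, w t ≤ c) (hs : 0 ≤ s) :
    d * ∫ t in (0:ℝ)..s, ω t ≤ ∫ t in (0:ℝ)..s, w t * ω t := by
  rw [← intervalIntegral.integral_const_mul]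
  exact intervalIntegral.integral_mono_on_of_le_Ioo hs (hωi.const_mul d)
    (intervalIntegrable_mul_weight hωi hw hdw hwc hs)
    fun t ht => mul_le_mul_of_nonneg_right (hdw t ht.1) (hω t ht.1)

theorem radialSlope_nonneg (hω : ∀ t > 0, 0 ≤ ω t) (hw : ∀ t > 0, 0 ≤ w t) (hs : 0 < s) :
    0 ≤ radialSlope ω w s :=
  div_nonneg (intervalIntegral_nonneg_of_forall_pos (fun t ht => mul_nonneg (hw t ht) (hω t ht))
    hs.le) (hω s hs)

theorem radialSlope_le (hω : ∀ t > 0, 0 ≤ ω t) (hωi : IntervalIntegrable ω volume 0 s)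
    (hw : ∀ t > 0, 0 ≤ w t) (hwc : ∀ t > 0, w t ≤ c) (hs : 0 < s) :
    radialSlope ω w s ≤ c * volRatio ω s := by
  rw [volRatio, mul_div_assoc']
  exact div_le_div_of_nonneg_right (integral_mul_weight_le hω hωi hw hwc hs.le) (hω s hs)

theorem mul_volRatio_le_radialSlope (hω : ∀ t > 0, 0 ≤ ω t)
    (hωi : IntervalIntegrable ω volume 0 s) (hw : AEMeasurable w (volume.restrict (Ioi 0)))
    (hdw : ∀ t > 0, d ≤ w t) (hwc : ∀ t > 0, w t ≤ c) (hs : 0 < s) :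
    d * volRatio ω s ≤ radialSlope ω w s := by
  rw [volRatio, mul_div_assoc']
  exact div_le_div_of_nonneg_right (mul_integral_le_integral_mul_weight hω hωi hw hdw hwc hs.le)
    (hω s hs)

theorem integrableOn_radialSlope (hω : ∀ t > 0, 0 ≤ ω t) (hωl : LocallyIntegrableOn ω (Ici 0))
    (hΘ : IntegrableOn (volRatio ω) (Ioi 0)) (hw : ∀ t > 0, 0 ≤ w t) (hwc : ∀ t > 0, w t ≤ c) :
    IntegrableOn (radialSlope ω w) (Ioi 0) := by
  have hωm : AEMeasurable ω (volume.restrict (Ioi 0)) :=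
    (hωl.aestronglyMeasurable.mono_measure
      (Measure.restrict_mono Ioi_subset_Ici_self le_rfl)).aemeasurable
  have hmeas : AEStronglyMeasurable (radialSlope ω w) (volume.restrict (Ioi 0)) :=
    ((aemeasurable_primitive_of_nonneg fun t ht => mul_nonneg (hw t ht) (hω t ht)).div
      hωm).aestronglyMeasurable
  refine (hΘ.const_mul c).mono' hmeas (ae_restrict_of_forall_mem measurableSet_Ioi fun s hs => ?_)
  rw [Real.norm_of_nonneg (radialSlope_nonneg hω hw hs)]
  exact radialSlope_le hω (hωl.intervalIntegrable_of_Ici (le_of_lt hs)) hw hwc hs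

theorem radialPotential_nonneg (hω : ∀ t > 0, 0 ≤ ω t) (hw : ∀ t > 0, 0 ≤ w t) (hr : 0 ≤ r) :
    0 ≤ radialPotential ω w r :=
  intervalIntegral_nonneg_of_forall_pos (fun _ hs => radialSlope_nonneg hω hw hs) hr

theorem radialPotential_le (hω : ∀ t > 0, 0 ≤ ω t) (hωl : LocallyIntegrableOn ω (Ici 0))
    (hΘ : IntegrableOn (volRatio ω) (Ioi 0)) (hw : ∀ t > 0, 0 ≤ w t) (hwc : ∀ t > 0, w t ≤ c)
    (hr : 0 ≤ r) :
    radialPotential ω w r ≤ c * ∫ s in Ioi 0, volRatio ω s := by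
  have hK := integrableOn_radialSlope hω hωl hΘ hw hwc
  rw [radialPotential, intervalIntegral.integral_of_le hr, ← integral_const_mul]
  calc ∫ s in Ioc 0 r, radialSlope ω w s ≤ ∫ s in Ioi 0, radialSlope ω w s :=
        setIntegral_mono_set hK
          (ae_restrict_of_forall_mem measurableSet_Ioi fun s hs => radialSlope_nonneg hω hw hs)
          Ioc_subset_Ioi_self.eventuallyLE
    _ ≤ ∫ s in Ioi 0, c * volRatio ω s :=
        setIntegral_mono_on hK (hΘ.const_mul c) measurableSet_Ioi fun s hs =>
          radialSlope_le hω (hωl.intervalIntegrable_of_Ici (le_of_lt hs)) hw hwc hs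

theorem mul_intervalIntegral_volRatio_le_radialPotential (hω : ∀ t > 0, 0 ≤ ω t)
    (hωl : LocallyIntegrableOn ω (Ici 0)) (hΘ : IntegrableOn (volRatio ω) (Ioi 0))
    (hw : AEMeasurable w (volume.restrict (Ioi 0))) (hd : 0 ≤ d) (hdw : ∀ t > 0, d ≤ w t)
    (hwc : ∀ t > 0, w t ≤ c) (hr : 0 ≤ r) :
    d * ∫ s in (0:ℝ)..r, volRatio ω s ≤ radialPotential ω w r := by
  have hK := integrableOn_radialSlope hω hωl hΘ (fun t ht => hd.trans (hdw t ht)) hwc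
  rw [← intervalIntegral.integral_const_mul]
  exact intervalIntegral.integral_mono_on_of_le_Ioo hr
    ((intervalIntegrable_iff_integrableOn_Ioc_of_le hr).2
      ((hΘ.mono_set Ioc_subset_Ioi_self).const_mul d))
    ((intervalIntegrable_iff_integrableOn_Ioc_of_le hr).2 (hK.mono_set Ioc_subset_Ioi_self))
    fun s hs => mul_volRatio_le_radialSlope hω (hωl.intervalIntegrable_of_Ici hs.1.le) hw hdw
      hwc hs.1

theorem mul_integral_volRatio_le_of_radialPotential_le (hω : ∀ t > 0, 0 ≤ ω t)
    (hωl : LocallyIntegrableOn ω (Ici 0)) (hΘ : IntegrableOn (volRatio ω) (Ioi 0))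
    (hw : AEMeasurable w (volume.restrict (Ioi 0))) (hd : 0 ≤ d) (hdw : ∀ t > 0, d ≤ w t)
    (hwc : ∀ t > 0, w t ≤ c) {M : ℝ} (hM : ∀ r ≥ 0, radialPotential ω w r ≤ M) :
    d * ∫ r in Ioi 0, volRatio ω r ≤ M :=
  le_of_tendsto ((intervalIntegral_tendsto_integral_Ioi 0 hΘ tendsto_id).const_mul d)
    ((eventually_ge_atTop 0).mono fun r hr =>
      (mul_intervalIntegral_volRatio_le_radialPotential hω hωl hΘ hw hd hdw hwc hr).trans (hM r hr))

theorem aemeasurable_of_eq_sub_radialPotential {x : ℝ → ℝ} {ξ : ℝ} (hω : ∀ t > 0, 0 ≤ ω t)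
    (hw : ∀ t > 0, 0 ≤ w t) (hx : ∀ r ≥ 0, x r = ξ - radialPotential ω w r) :
    AEMeasurable x (volume.restrict (Ioi 0)) :=
  ((aemeasurable_primitive_of_nonneg fun _ hs => radialSlope_nonneg hω hw hs).const_sub ξ).congr
    (ae_restrict_of_forall_mem measurableSet_Ioi fun r hr => (hx r (le_of_lt hr)).symm)

end Radial
theorem initial_data_bounds_general
    (n : ℕ) (ψ : ℝ → ℝ)
    (hψpos : ∀ r > (0:ℝ), 0 < ψ r)
    (hψcont : ContinuousOn ψ (Ici 0))
    (hΘint : IntegrableOn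
      (fun r => (∫ s in (0:ℝ)..r, ψ s ^ (n-1)) / ψ r ^ (n-1)) (Ioi (0:ℝ)))
    (p q : ℝ) (hp : 0 < p) (hq : 0 < q)
    (ξ η : ℝ)
    (u v : ℝ → ℝ)
    (hu : ∀ r ≥ (0:ℝ), 0 < u r) (hv : ∀ r ≥ (0:ℝ), 0 < v r)
    (hequ : ∀ r ≥ (0:ℝ),
      u r = ξ - ∫ s in (0:ℝ)..r, (∫ t in (0:ℝ)..s, v t ^ q * ψ t ^ (n-1)) / ψ s ^ (n-1))
    (heqv : ∀ r ≥ (0:ℝ),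
      v r = η - ∫ s in (0:ℝ)..r, (∫ t in (0:ℝ)..s, u t ^ p * ψ t ^ (n-1)) / ψ s ^ (n-1)) :
    ξ ≥ (max (η - (∫ r in Ioi (0:ℝ), (∫ s in (0:ℝ)..r, ψ s ^ (n-1)) / ψ r ^ (n-1)) * ξ ^ p) 0) ^ q *
          (∫ r in Ioi (0:ℝ), (∫ s in (0:ℝ)..r, ψ s ^ (n-1)) / ψ r ^ (n-1)) ∧
    η ≥ (max (ξ - (∫ r in Ioi (0:ℝ), (∫ s in (0:ℝ)..r, ψ s ^ (n-1)) / ψ r ^ (n-1)) * η ^ q) 0) ^ p *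
          (∫ r in Ioi (0:ℝ), (∫ s in (0:ℝ)..r, ψ s ^ (n-1)) / ψ r ^ (n-1)) := by
  set ω : ℝ → ℝ := fun s => ψ s ^ (n - 1)
  set θ := ∫ r in Ioi (0:ℝ), volRatio ω r
  have hω : ∀ t > 0, 0 ≤ ω t := fun t ht => (pow_pos (hψpos t ht) _).le
  have hωl : LocallyIntegrableOn ω (Ici 0) := (hψcont.pow _).locallyIntegrableOn measurableSet_Ici
  have hu' : ∀ r ≥ 0, u r = ξ - radialPotential ω (fun t => v t ^ q) r := hequ
  have hv' : ∀ r ≥ 0, v r = η - radialPotential ω (fun t => u t ^ p) r := heqv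
  have hup : ∀ t > 0, 0 ≤ u t ^ p := fun t ht => Real.rpow_nonneg (hu t ht.le).le p
  have hvq : ∀ t > 0, 0 ≤ v t ^ q := fun t ht => Real.rpow_nonneg (hv t ht.le).le q
  have hup_le : ∀ t > 0, u t ^ p ≤ ξ ^ p := fun t ht => Real.rpow_le_rpow (hu t ht.le).le
    (by linarith [hu' t ht.le, radialPotential_nonneg hω hvq ht.le]) hp.le
  have hvq_le : ∀ t > 0, v t ^ q ≤ η ^ q := fun t ht => Real.rpow_le_rpow (hv t ht.le).le
    (by linarith [hv' t ht.le, radialPotential_nonneg hω hup ht.le]) hq.le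
  have hv_ge : ∀ t > 0, max (η - θ * ξ ^ p) 0 ^ q ≤ v t ^ q := fun t ht =>
    Real.rpow_le_rpow (le_max_right _ _) (max_le (by
      linarith [hv' t ht.le, radialPotential_le hω hωl hΘint hup hup_le ht.le])
      (hv t ht.le).le) hq.le
  have hu_ge : ∀ t > 0, max (ξ - θ * η ^ q) 0 ^ p ≤ u t ^ p := fun t ht =>
    Real.rpow_le_rpow (le_max_right _ _) (max_le (by
      linarith [hu' t ht.le, radialPotential_le hω hωl hΘint hvq hvq_le ht.le])
      (hu t ht.le).le) hp.le
  have hu_meas := aemeasurable_of_eq_sub_radialPotential hω hvq hu'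
  have hv_meas := aemeasurable_of_eq_sub_radialPotential hω hup hv'
  constructor
  · refine mul_integral_volRatio_le_of_radialPotential_le hω hωl hΘint (hv_meas.pow_const q)
      (Real.rpow_nonneg (le_max_right _ _) q) hv_ge hvq_le fun r hr => ?_
    linarith [hu' r hr, hu r hr]
  · refine mul_integral_volRatio_le_of_radialPotential_le hω hωl hΘint (hu_meas.pow_const p)
      (Real.rpow_nonneg (le_max_right _ _) p) hu_ge hup_le fun r hr => ?_
    linarith [hv' r hr, hv r hr]

/-- Necessary bounds on the initial data of a globally positive solution on a
stochastically incomplete model: `ξ ≥ (η - θξ^p)₊^q θ` and `η ≥ (ξ - θη^q)₊^p θ`. -/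
theorem initial_data_bounds
    (n : ℕ) (hn : 3 ≤ n) (ψ : ℝ → ℝ)
    (hψ0 : ψ 0 = 0) (hψ'0 : HasDerivAt ψ 1 0)
    (hψpos : ∀ r > (0:ℝ), 0 < ψ r)
    (hψcont : ContinuousOn ψ (Ici 0))
    (hΘint : IntegrableOn
      (fun r => (∫ s in (0:ℝ)..r, ψ s ^ (n-1)) / ψ r ^ (n-1)) (Ioi (0:ℝ)))
    (p q : ℝ) (hp : 0 < p) (hq : 0 < q)
    (ξ η : ℝ) (hξ : 0 < ξ) (hη : 0 < η)
    (u v : ℝ → ℝ)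
    (hu : ∀ r ≥ (0:ℝ), 0 < u r) (hv : ∀ r ≥ (0:ℝ), 0 < v r)
    (hequ : ∀ r ≥ (0:ℝ),
      u r = ξ - ∫ s in (0:ℝ)..r, (∫ t in (0:ℝ)..s, v t ^ q * ψ t ^ (n-1)) / ψ s ^ (n-1))
    (heqv : ∀ r ≥ (0:ℝ),
      v r = η - ∫ s in (0:ℝ)..r, (∫ t in (0:ℝ)..s, u t ^ p * ψ t ^ (n-1)) / ψ s ^ (n-1)) :
    ξ ≥ (max (η - (∫ r in Ioi (0:ℝ), (∫ s in (0:ℝ)..r, ψ s ^ (n-1)) / ψ r ^ (n-1)) * ξ ^ p) 0) ^ q *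
          (∫ r in Ioi (0:ℝ), (∫ s in (0:ℝ)..r, ψ s ^ (n-1)) / ψ r ^ (n-1)) ∧
    η ≥ (max (ξ - (∫ r in Ioi (0:ℝ), (∫ s in (0:ℝ)..r, ψ s ^ (n-1)) / ψ r ^ (n-1)) * η ^ q) 0) ^ p *
          (∫ r in Ioi (0:ℝ), (∫ s in (0:ℝ)..r, ψ s ^ (n-1)) / ψ r ^ (n-1)) :=
  initial_data_bounds_general n ψ hψpos hψcont hΘint p q hp hq ξ η u v hu hv hequ heqv
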